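/- Convolution with an exponentially stable semigroup preserves asymptotic almost automorphy: Let (T(t))_{t≥0} be an exponentially stable C₀-semigroup on Y with constants M ≥ 1 and α > 0, and let g : ℝ → Y be bounded, continuous and asymptotically almost automorphic. Then for every s ∈ ℝ the Bochner integral Λ(s) = ∫_{−∞}^s T(s−t) g(t) dt converges absolutely, and the function Λ : ℝ → Y is asymptotically almost automorphic. -/

import Mathlib

/-!
After the substitution `t ↦ s - t`, `Λ s = ∫_0^∞ T t (g (s - t)) dt`. For every bounded
strongly measurable `f` the integrand is dominated by the integrable function `M C e^{-α t}`,
so by dominated convergence pointwise convergence of the translates `f (s_n - ·)` passes to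
convergence of `Λ f (s_n)`. This one fact gives the continuity of `Λ f`, the two limits in the
definition of almost automorphy (with `Λ f̄` as the limit function), and the decay of `Λ φ`;
linearity of `Λ` then handles `g = G + φ`. Since `f̄` is only a pointwise limit of continuous
functions, measurability of `t ↦ T t (f̄ (s - t))` comes from the joint continuity of
`(t, x) ↦ T t x`, which follows from strong continuity and the uniform bound `‖T t‖ ≤ M`.
-/

open Filter Topology MeasureTheory

/-- A continuous function `f : ℝ → Y` is almost automorphic if for every sequence of reals
there is a subsequence `(τ n)` and a function `f̄` such that `f (s + τ n) → f̄ s` and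
`f̄ (s - τ n) → f s` pointwise. -/
def AlmostAutomorphic {Y : Type*} [NormedAddCommGroup Y] (f : ℝ → Y) : Prop :=
  Continuous f ∧
  ∀ s : ℕ → ℝ, ∃ (φ : ℕ → ℕ) (fbar : ℝ → Y), StrictMono φ ∧
    (∀ t : ℝ, Tendsto (fun n => f (t + s (φ n))) atTop (𝓝 (fbar t))) ∧
    (∀ t : ℝ, Tendsto (fun n => fbar (t - s (φ n))) atTop (𝓝 (f t)))

/-- `f : ℝ → Y` is asymptotically almost automorphic if `f = g + φ` where `g` is almost
automorphic and `φ` is continuous with `‖φ s‖ → 0` as `s → +∞`. -/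
def AsymptoticallyAlmostAutomorphic {Y : Type*} [NormedAddCommGroup Y] (f : ℝ → Y) : Prop :=
  ∃ g φ : ℝ → Y, AlmostAutomorphic g ∧ Continuous φ ∧
    Tendsto (fun s => ‖φ s‖) atTop (𝓝 0) ∧ ∀ s, f s = g s + φ s


open Set

section Reflection

variable {E : Type*} [NormedAddCommGroup E]

lemma integrableOn_Iic_iff_integrableOn_Ici_sub {F : ℝ → E} (s : ℝ) :
    IntegrableOn F (Iic s) ↔ IntegrableOn (fun t => F (s - t)) (Ici 0) := by
  rw [← (Measure.measurePreserving_sub_left volume s).integrableOn_comp_preimage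
    (Homeomorph.subLeft s).measurableEmbedding]
  simp [Function.comp_def]

lemma setIntegral_Iic_eq_setIntegral_Ici_sub [NormedSpace ℝ E] (F : ℝ → E) (s : ℝ) :
    ∫ t in Iic s, F t = ∫ t in Ici 0, F (s - t) := by
  rw [← (Measure.measurePreserving_sub_left volume s).setIntegral_preimage_emb
    (Homeomorph.subLeft s).measurableEmbedding]
  simp

end Reflection

lemma AlmostAutomorphic.exists_norm_le {Y : Type*} [NormedAddCommGroup Y] {f : ℝ → Y}
    (hf : AlmostAutomorphic f) : ∃ C, ∀ t, ‖f t‖ ≤ C := by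
  by_contra! hunb
  choose s hs using fun n : ℕ => hunb n
  obtain ⟨φ, fbar, hφ, hconv, -⟩ := hf.2 s
  refine not_tendsto_atTop_of_tendsto_nhds (hconv 0).norm
    (tendsto_atTop_mono (fun n => ?_) tendsto_natCast_atTop_atTop)
  calc (n : ℝ) ≤ φ n := Nat.cast_le.2 hφ.le_apply
    _ ≤ ‖f (0 + s (φ n))‖ := by rw [zero_add]; exact (hs (φ n)).le

section Semigroup

variable {Y : Type*} [NormedAddCommGroup Y] [NormedSpace ℝ Y] {T : ℝ → Y →L[ℝ] Y}
  {M α C : ℝ}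

lemma norm_le_of_norm_le_mul_exp (hα : 0 ≤ α)
    (hTbound : ∀ t ≥ (0 : ℝ), ‖T t‖ ≤ M * Real.exp (-α * t)) {t : ℝ} (ht : 0 ≤ t) :
    ‖T t‖ ≤ M := by
  have hM : 0 ≤ M := by simpa using (norm_nonneg _).trans (hTbound 0 le_rfl)
  calc ‖T t‖ ≤ M * Real.exp (-α * t) := hTbound t ht
    _ ≤ M * 1 := by gcongr; exact Real.exp_le_one_iff.2 (by nlinarith)
    _ = M := mul_one M

lemma norm_apply_le_mul_exp (hTbound : ∀ t ≥ (0 : ℝ), ‖T t‖ ≤ M * Real.exp (-α * t))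
    {t : ℝ} (ht : 0 ≤ t) {x : Y} (hx : ‖x‖ ≤ C) :
    ‖T t x‖ ≤ M * C * Real.exp (-α * t) :=
  calc ‖T t x‖ ≤ M * Real.exp (-α * t) * ‖x‖ := (T t).le_of_opNorm_le (hTbound t ht) x
    _ ≤ M * Real.exp (-α * t) * C := by
        gcongr; exact (norm_nonneg _).trans (hTbound t ht)
    _ = M * C * Real.exp (-α * t) := by ring

lemma continuous_apply_max_zero (hTcont : ∀ x : Y, ContinuousOn (fun t => T t x) (Ici 0))
    (hT : ∀ t ≥ (0 : ℝ), ‖T t‖ ≤ M) :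
    Continuous fun p : ℝ × Y => T (max p.1 0) p.2 := by
  refine continuous_iff_continuousAt.2 fun ⟨t₀, x₀⟩ => ?_
  have hmax : Continuous fun t => T (max t 0) x₀ :=
    (hTcont x₀).comp_continuous (continuous_id.max continuous_const) fun t => le_max_right t 0
  have hsmall :
      Tendsto (fun p : ℝ × Y => T (max p.1 0) (p.2 - x₀)) (𝓝 (t₀, x₀)) (𝓝 0) := by
    refine squeeze_zero_norm (fun p => (T _).le_of_opNorm_le (hT _ (le_max_right _ _)) _) ?_
    simpa using
      ((continuous_snd.sub (continuous_const (y := x₀))).norm.const_mul M).tendsto (t₀, x₀)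
  simpa [ContinuousAt] using hsmall.add ((hmax.comp continuous_fst).tendsto (t₀, x₀))

lemma aestronglyMeasurable_apply (hTcont : ∀ x : Y, ContinuousOn (fun t => T t x) (Ici 0))
    (hT : ∀ t ≥ (0 : ℝ), ‖T t‖ ≤ M) {f : ℝ → Y} (hf : StronglyMeasurable f) :
    AEStronglyMeasurable (fun t => T t (f t)) (volume.restrict (Ici 0)) := by
  refine ((continuous_apply_max_zero hTcont hT).comp_stronglyMeasurable
    (stronglyMeasurable_id.prodMk hf)).aestronglyMeasurable.congr ?_
  filter_upwards [ae_restrict_mem measurableSet_Ici] with t (ht : 0 ≤ t)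
  simp [max_eq_left ht]

lemma integrableOn_Ici_mul_exp_neg (hα : 0 < α) (c : ℝ) :
    IntegrableOn (fun t => c * Real.exp (-α * t)) (Ici 0) :=
  ((integrableOn_Ici_iff_integrableOn_Ioi (by finiteness)).2
    (exp_neg_integrableOn_Ioi 0 hα)).const_mul c

lemma integrableOn_apply (hα : 0 < α)
    (hTbound : ∀ t ≥ (0 : ℝ), ‖T t‖ ≤ M * Real.exp (-α * t))
    (hTcont : ∀ x : Y, ContinuousOn (fun t => T t x) (Ici 0)) {f : ℝ → Y}
    (hf : StronglyMeasurable f) (hC : ∀ t, ‖f t‖ ≤ C) :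
    IntegrableOn (fun t => T t (f t)) (Ici 0) :=
  Integrable.mono' (g := fun t => M * C * Real.exp (-α * t))
    (integrableOn_Ici_mul_exp_neg hα _)
    (aestronglyMeasurable_apply hTcont (fun _ => norm_le_of_norm_le_mul_exp hα.le hTbound) hf)
    (ae_restrict_of_forall_mem measurableSet_Ici fun _ ht =>
      norm_apply_le_mul_exp hTbound ht (hC _))

/-- The convolution `∫_{-∞}^s T(s - t) f(t) dt`, after the substitution `t ↦ s - t`. -/
noncomputable def semigroupConv (T : ℝ → Y →L[ℝ] Y) (f : ℝ → Y) (s : ℝ) : Y :=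
  ∫ t in Ici 0, T t (f (s - t))

lemma tendsto_semigroupConv (hα : 0 < α)
    (hTbound : ∀ t ≥ (0 : ℝ), ‖T t‖ ≤ M * Real.exp (-α * t))
    (hTcont : ∀ x : Y, ContinuousOn (fun t => T t x) (Ici 0)) {f g : ℝ → Y}
    (hf : StronglyMeasurable f) (hC : ∀ t, ‖f t‖ ≤ C)
    {ι : Type*} {l : Filter ι} [l.IsCountablyGenerated] {s : ι → ℝ} {s₀ : ℝ}
    (hlim : ∀ t, Tendsto (fun i => f (s i - t)) l (𝓝 (g (s₀ - t)))) :
    Tendsto (fun i => semigroupConv T f (s i)) l (𝓝 (semigroupConv T g s₀)) :=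
  tendsto_integral_filter_of_dominated_convergence _
    (Eventually.of_forall fun _ => aestronglyMeasurable_apply hTcont
      (fun _ => norm_le_of_norm_le_mul_exp hα.le hTbound)
      (hf.comp_measurable (measurable_const.sub measurable_id)))
    (Eventually.of_forall fun _ => ae_restrict_of_forall_mem measurableSet_Ici
      fun _ ht => norm_apply_le_mul_exp hTbound ht (hC _))
    (integrableOn_Ici_mul_exp_neg hα _)
    (ae_of_all _ fun t => ((T t).continuous.tendsto _).comp (hlim t))

lemma continuous_semigroupConv (hα : 0 < α)
    (hTbound : ∀ t ≥ (0 : ℝ), ‖T t‖ ≤ M * Real.exp (-α * t))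
    (hTcont : ∀ x : Y, ContinuousOn (fun t => T t x) (Ici 0)) {f : ℝ → Y}
    (hf : Continuous f) (hC : ∀ t, ‖f t‖ ≤ C) :
    Continuous (semigroupConv T f) :=
  continuous_iff_seqContinuous.2 fun {_ _} hs => tendsto_semigroupConv hα hTbound hTcont
    hf.stronglyMeasurable hC fun t => (hf.tendsto _).comp (hs.sub_const t)

lemma tendsto_semigroupConv_atTop_zero (hα : 0 < α)
    (hTbound : ∀ t ≥ (0 : ℝ), ‖T t‖ ≤ M * Real.exp (-α * t))
    (hTcont : ∀ x : Y, ContinuousOn (fun t => T t x) (Ici 0)) {f : ℝ → Y}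
    (hf : StronglyMeasurable f) (hC : ∀ t, ‖f t‖ ≤ C) (hf₀ : Tendsto f atTop (𝓝 0)) :
    Tendsto (semigroupConv T f) atTop (𝓝 0) := by
  have := tendsto_semigroupConv hα hTbound hTcont hf hC (g := 0) (s₀ := 0) (s := id)
    fun t => hf₀.comp (tendsto_atTop_add_const_right _ (-t) tendsto_id)
  have hzero : semigroupConv T 0 0 = 0 := by simp [semigroupConv]
  simpa [hzero] using this

lemma semigroupConv_add (hα : 0 < α)
    (hTbound : ∀ t ≥ (0 : ℝ), ‖T t‖ ≤ M * Real.exp (-α * t))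
    (hTcont : ∀ x : Y, ContinuousOn (fun t => T t x) (Ici 0)) {f g : ℝ → Y} {C' : ℝ}
    (hf : StronglyMeasurable f) (hfC : ∀ t, ‖f t‖ ≤ C)
    (hg : StronglyMeasurable g) (hgC : ∀ t, ‖g t‖ ≤ C') :
    semigroupConv T (f + g) = semigroupConv T f + semigroupConv T g := by
  funext s
  have hsub : Measurable fun t : ℝ => s - t := measurable_const.sub measurable_id
  simp only [semigroupConv, Pi.add_apply, map_add]
  exact integral_add
    (integrableOn_apply hα hTbound hTcont (hf.comp_measurable hsub) fun _ => hfC _)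
    (integrableOn_apply hα hTbound hTcont (hg.comp_measurable hsub) fun _ => hgC _)

theorem almostAutomorphic_semigroupConv (hα : 0 < α)
    (hTbound : ∀ t ≥ (0 : ℝ), ‖T t‖ ≤ M * Real.exp (-α * t))
    (hTcont : ∀ x : Y, ContinuousOn (fun t => T t x) (Ici 0)) {f : ℝ → Y}
    (hf : AlmostAutomorphic f) : AlmostAutomorphic (semigroupConv T f) := by
  obtain ⟨C, hC⟩ := hf.exists_norm_le
  refine ⟨continuous_semigroupConv hα hTbound hTcont hf.1 hC, fun s => ?_⟩
  obtain ⟨φ, fbar, hφ, hfwd, hbwd⟩ := hf.2 s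
  have hbarC : ∀ t, ‖fbar t‖ ≤ C := fun t => le_of_tendsto' (hfwd t).norm fun _ => hC _
  have hbar : StronglyMeasurable fbar := stronglyMeasurable_of_tendsto atTop
    (fun n => (hf.1.comp (continuous_add_const (s (φ n)))).stronglyMeasurable)
    (tendsto_pi_nhds.2 hfwd)
  refine ⟨φ, semigroupConv T fbar, hφ, fun u => ?_, fun u => ?_⟩
  · refine tendsto_semigroupConv hα hTbound hTcont hf.1.stronglyMeasurable hC fun t => ?_
    simpa only [add_sub_right_comm] using hfwd (u - t)
  · refine tendsto_semigroupConv hα hTbound hTcont hbar hbarC fun t => ?_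
    simpa only [sub_right_comm] using hbwd (u - t)

theorem asymptoticallyAlmostAutomorphic_semigroupConv (hα : 0 < α)
    (hTbound : ∀ t ≥ (0 : ℝ), ‖T t‖ ≤ M * Real.exp (-α * t))
    (hTcont : ∀ x : Y, ContinuousOn (fun t => T t x) (Ici 0)) {f : ℝ → Y}
    (hf : AsymptoticallyAlmostAutomorphic f) (hC : ∀ t, ‖f t‖ ≤ C) :
    AsymptoticallyAlmostAutomorphic (semigroupConv T f) := by
  obtain ⟨g, φ, hg, hφ, hφ₀, hfgφ⟩ := hf
  obtain ⟨Cg, hCg⟩ := hg.exists_norm_le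
  have hφC : ∀ t, ‖φ t‖ ≤ C + Cg := fun t => by
    simpa [hfgφ] using (norm_sub_le (f t) (g t)).trans (add_le_add (hC t) (hCg t))
  have hsplit : semigroupConv T f = semigroupConv T g + semigroupConv T φ := by
    rw [← semigroupConv_add hα hTbound hTcont hg.1.stronglyMeasurable hCg
      hφ.stronglyMeasurable hφC]
    exact congrArg _ (funext hfgφ)
  refine ⟨_, _, almostAutomorphic_semigroupConv hα hTbound hTcont hg,
    continuous_semigroupConv hα hTbound hTcont hφ hφC, ?_, fun s => congrFun hsplit s⟩
  exact (tendsto_semigroupConv_atTop_zero hα hTbound hTcont hφ.stronglyMeasurable hφC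
    (tendsto_zero_iff_norm_tendsto_zero.2 hφ₀)).norm.trans (by simp)

end Semigroup

theorem convolution_semigroup_asymptoticallyAlmostAutomorphic_general
    {Y : Type*} [NormedAddCommGroup Y] [NormedSpace ℝ Y]
    (T : ℝ → Y →L[ℝ] Y) (M α : ℝ) (hα : 0 < α)
    (hTcont : ∀ x : Y, ContinuousOn (fun t => T t x) (Set.Ici (0 : ℝ)))
    (hTbound : ∀ t ≥ (0 : ℝ), ‖T t‖ ≤ M * Real.exp (-α * t))
    (g : ℝ → Y) (hgcont : Continuous g) (hgbdd : ∃ C, ∀ t : ℝ, ‖g t‖ ≤ C)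
    (hgaaa : AsymptoticallyAlmostAutomorphic g) :
    (∀ s : ℝ, IntegrableOn (fun t => T (s - t) (g t)) (Set.Iic s)) ∧
    AsymptoticallyAlmostAutomorphic (fun s => ∫ t in Set.Iic s, T (s - t) (g t)) := by
  obtain ⟨C, hC⟩ := hgbdd
  have hΛ : (fun s => ∫ t in Iic s, T (s - t) (g t)) = semigroupConv T g := by
    funext s
    simp [setIntegral_Iic_eq_setIntegral_Ici_sub _ s, semigroupConv]
  refine ⟨fun s => (integrableOn_Iic_iff_integrableOn_Ici_sub s).2 ?_, ?_⟩
  · simpa using integrableOn_apply hα hTbound hTcont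
      (hgcont.comp (continuous_sub_left s)).stronglyMeasurable fun _ => hC _
  · exact hΛ ▸ asymptoticallyAlmostAutomorphic_semigroupConv hα hTbound hTcont hgaaa hC

/-- Convolution with an exponentially stable `C₀`-semigroup preserves asymptotic almost
automorphy: if `‖T t‖ ≤ M e^{-α t}` for `t ≥ 0` and `g` is bounded, continuous and
asymptotically almost automorphic, then `Λ s = ∫_{-∞}^s T (s - t) (g t) dt` converges
absolutely for every `s` and `Λ` is asymptotically almost automorphic. -/
theorem convolution_semigroup_asymptoticallyAlmostAutomorphic
    {Y : Type*} [NormedAddCommGroup Y] [NormedSpace ℝ Y] [CompleteSpace Y]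
    (T : ℝ → Y →L[ℝ] Y) (M α : ℝ) (hM : 1 ≤ M) (hα : 0 < α)
    (hT0 : T 0 = ContinuousLinearMap.id ℝ Y)
    (hTadd : ∀ t ≥ (0 : ℝ), ∀ s ≥ (0 : ℝ), T (t + s) = (T t).comp (T s))
    (hTcont : ∀ x : Y, ContinuousOn (fun t => T t x) (Set.Ici (0 : ℝ)))
    (hTbound : ∀ t ≥ (0 : ℝ), ‖T t‖ ≤ M * Real.exp (-α * t))
    (g : ℝ → Y) (hgcont : Continuous g) (hgbdd : ∃ C, ∀ t : ℝ, ‖g t‖ ≤ C)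
    (hgaaa : AsymptoticallyAlmostAutomorphic g) :
    (∀ s : ℝ, IntegrableOn (fun t => T (s - t) (g t)) (Set.Iic s)) ∧
    AsymptoticallyAlmostAutomorphic (fun s => ∫ t in Set.Iic s, T (s - t) (g t)) :=
  convolution_semigroup_asymptoticallyAlmostAutomorphic_general T M α hα hTcont hTbound g hgcont
    hgbdd hgaaa
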